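/- For any partition λ, the quantity ∏_j q^{(λ'_j)^2} (1/q)_{m_j(λ)} equals q^{|λ| + 2n(λ)} ∏_{s ∈ λ, a(s)=0} (1 - 1/q^{h(s)}), where n(λ) = ∑_i (i-1)λ_i, a(s) is the arm length, and h(s) the hook length of cell s. -/

import Mathlib

open Finset

noncomputable section

/-- The q-Pochhammer-type product `(1/q)_m = ∏_{k=1}^m (1 - 1/q^k)`. -/
def qPoch (q : ℝ) (m : ℕ) : ℝ := ∏ k ∈ Finset.Icc 1 m, (1 - 1/q^k)

/-- `conjPart l j = λ'_j`, the `j`-th part of the conjugate partition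
(the number of parts of `l` that are at least `j`). -/
def conjPart {n : ℕ} (l : n.Partition) (j : ℕ) : ℕ :=
  Multiset.countP (fun p => j ≤ p) l.parts

/-- `rowLen l i = λ_i`, the `i`-th largest part of `l` (1-indexed, `0` if `i` exceeds
the number of parts). -/
def rowLen {n : ℕ} (l : n.Partition) (i : ℕ) : ℕ :=
  ((Finset.Icc 1 n).filter (fun j => i ≤ conjPart l j)).card

/-- The Young diagram of `l`, as the set of cells `(i,j)` (row `i`, column `j`,
both 1-indexed) with `1 ≤ j ≤ λ_i`. -/
def cells {n : ℕ} (l : n.Partition) : Finset (ℕ × ℕ) :=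
  (Finset.Icc 1 n ×ˢ Finset.Icc 1 n).filter (fun s => s.2 ≤ rowLen l s.1)

/-- The arm length `a(s) = λ_i - j` of the cell `s = (i,j)`. -/
def arm {n : ℕ} (l : n.Partition) (s : ℕ × ℕ) : ℕ := rowLen l s.1 - s.2

/-- The leg length `l(s) = λ'_j - i` of the cell `s = (i,j)`. -/
def leg {n : ℕ} (l : n.Partition) (s : ℕ × ℕ) : ℕ := conjPart l s.2 - s.1

/-- The hook length `h(s) = a(s) + l(s) + 1` of the cell `s`. -/
def hookLen {n : ℕ} (l : n.Partition) (s : ℕ × ℕ) : ℕ := arm l s + leg l s + 1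

/-- `n(λ) = ∑_i (i-1) λ_i`. -/
def nStat {n : ℕ} (l : n.Partition) : ℕ := ∑ i ∈ Finset.Icc 1 n, (i - 1) * rowLen l i

/-- The multiplicity `m_j(λ)` of `j` as a part of `l`. -/
def mult {n : ℕ} (l : n.Partition) (j : ℕ) : ℕ := Multiset.count j l.parts

/-- The denominator `∏_j q^{(λ'_j)^2} (1/q)_{m_j(λ)}` appearing in the measure `P_{n,q}`. -/
def Pden (q : ℝ) {n : ℕ} (l : n.Partition) : ℝ :=
  ∏ j ∈ Finset.Icc 1 n, q ^ ((conjPart l j)^2) * qPoch q (mult l j)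

/-- The measure `P_{n,q}(λ) = q^n (1/q)_n / ∏_j q^{(λ'_j)^2} (1/q)_{m_j(λ)}`. -/
def Pmeas (q : ℝ) {n : ℕ} (l : n.Partition) : ℝ := q^n * qPoch q n / Pden q l

/-- `z(n,q)`: the coefficient of `u^n` in the formal expansion of
`∏_{i≥1} ∏_{j≥0} 1/(1 - u/q^{i+j})`, obtained by expanding each factor
as a geometric series and collecting terms of total degree `n`. -/
def zCoeff (n : ℕ) (q : ℝ) : ℝ :=
  ∑' f : {f : (ℕ × ℕ) →₀ ℕ // (f.sum fun _ k => k) = n},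
    ∏ p ∈ (f : (ℕ × ℕ) →₀ ℕ).support,
      ((1 : ℝ) / q ^ ((p.1 + 1) + p.2)) ^ ((f : (ℕ × ℕ) →₀ ℕ) p)

/-- The measure `Q_{n,q}(λ) = (1/z(n,q)) / (q^{|λ|+2n(λ)} ∏_{s∈λ} (1-1/q^{h(s)})^2)`. -/
def Qmeas (q : ℝ) {n : ℕ} (l : n.Partition) : ℝ :=
  (1 / zCoeff n q) *
    (1 / (q ^ (n + 2 * nStat l) * ∏ s ∈ cells l, (1 - 1/q^(hookLen l s))^2))

/-- `P_{n,q}^r`: the `P_{n,q}`-probability that the largest part of `λ` is `< r`. -/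
def Ptail (n : ℕ) (q : ℝ) (r : ℕ) : ℝ :=
  ∑ l ∈ Finset.univ.filter (fun l : n.Partition => ∀ p ∈ l.parts, p < r), Pmeas q l

end

/-!
Since `λ'_j` counts the parts of size at least `j`, the conjugate column lengths satisfy
`∑ λ'_j = |λ|` and `∑ λ'_j (λ'_j - 1) / 2 = n(λ)`, so `∑ λ'_j ^ 2 = |λ| + 2 n(λ)`.
A cell `(i, j)` ends its row exactly when `λ_i = j`, i.e. `λ'_{j+1} < i ≤ λ'_j`; these are
`m_j(λ)` cells of column `j`, whose hook lengths `λ'_j - i + 1` run through `1, …, m_j(λ)`,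
so they contribute exactly the factor `(1/q)_{m_j(λ)}`.
-/

theorem Multiset.sum_Icc_countP_le_eq_sum {m : ℕ} (s : Multiset ℕ) (hs : ∀ p ∈ s, p ≤ m) :
    ∑ j ∈ Finset.Icc 1 m, s.countP (j ≤ ·) = s.sum := by
  induction s using Multiset.induction_on with
  | empty => simp
  | cons a s ih =>
    have ha : a ≤ m := hs a (Multiset.mem_cons_self a s)
    have hfilter : (Finset.Icc 1 m).filter (· ≤ a) = Finset.Icc 1 a := by
      ext x; simp only [Finset.mem_filter, Finset.mem_Icc]; omega
    simp only [Multiset.countP_cons, Multiset.sum_cons, sum_add_distrib, ← sum_filter,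
      sum_const, smul_eq_mul, mul_one, hfilter, Nat.card_Icc, Nat.add_sub_cancel,
      ih fun p hp => hs p (Multiset.mem_cons_of_mem hp), add_comm]

theorem Finset.prod_Ioc_reflect_eq_prod_Icc {M : Type*} [CommMonoid M] (f : ℕ → M) (a m : ℕ) :
    ∏ i ∈ Ioc a (a + m), f (a + m - i + 1) = ∏ k ∈ Icc 1 m, f k := by
  refine prod_nbij' (fun i => a + m - i + 1) (fun k => a + m + 1 - k) ?_ ?_ ?_ ?_
    fun _ _ => rfl <;> intro x hx <;> simp only [mem_Ioc, mem_Icc] at hx ⊢ <;> omega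

section

variable {n : ℕ} (l : n.Partition)

theorem conjPart_antitone : Antitone (conjPart l) := fun _ _ h => by
  simp only [conjPart, Multiset.countP_eq_card_filter]
  exact Multiset.card_le_card (Multiset.monotone_filter_right _ fun p hp => h.trans hp)

theorem conjPart_le (j : ℕ) : conjPart l j ≤ n := calc
  conjPart l j ≤ Multiset.card l.parts := Multiset.countP_le_card _ _
  _ = Multiset.card l.parts • 1 := (mul_one _).symm
  _ ≤ l.parts.sum := Multiset.card_nsmul_le_sum fun _ hp => l.parts_pos hp
  _ = n := l.parts_sum

theorem conjPart_eq_zero_of_lt {j : ℕ} (hj : n < j) : conjPart l j = 0 :=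
  Multiset.countP_eq_zero.mpr fun _ hp hjp =>
    (hj.trans_le hjp).not_ge (Nat.Partition.le_of_mem_parts hp)

theorem conjPart_eq_conjPart_succ_add_mult (j : ℕ) :
    conjPart l j = conjPart l (j + 1) + mult l j := by
  simp only [conjPart, mult, Multiset.count]
  induction l.parts using Multiset.induction_on with
  | empty => simp
  | cons a s ih =>
    simp only [Multiset.countP_cons]
    split_ifs <;> omega

theorem rowLen_le (i : ℕ) : rowLen l i ≤ n :=
  (card_filter_le _ _).trans (Nat.card_Icc 1 n).le

theorem le_rowLen_iff {i j : ℕ} (hi : 1 ≤ i) (hj : 1 ≤ j) :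
    j ≤ rowLen l i ↔ i ≤ conjPart l j := by
  constructor
  · intro hji
    by_contra! hlt
    have hsub : (Icc 1 n).filter (fun j' => i ≤ conjPart l j') ⊆ Ico 1 j := by
      intro j' hj'
      simp only [mem_filter, mem_Icc, mem_Ico] at hj' ⊢
      refine ⟨hj'.1.1, lt_of_not_ge fun hjj' => ?_⟩
      exact (hj'.2.trans (conjPart_antitone l hjj')).not_gt hlt
    have := card_le_card hsub
    simp only [Nat.card_Ico] at this
    unfold rowLen at hji
    omega
  · intro hij
    have hjn : j ≤ n := by
      by_contra! hnj
      have := conjPart_eq_zero_of_lt l hnj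
      omega
    have hsub : Icc 1 j ⊆ (Icc 1 n).filter (fun j' => i ≤ conjPart l j') := by
      intro j' hj'
      simp only [mem_Icc, mem_filter] at hj' ⊢
      exact ⟨⟨hj'.1, hj'.2.trans hjn⟩, hij.trans (conjPart_antitone l hj'.2)⟩
    simpa [rowLen] using card_le_card hsub

theorem mem_cells_arm_eq_zero_iff (s : ℕ × ℕ) :
    s ∈ (cells l).filter (fun s => arm l s = 0) ↔
      s.2 ∈ Icc 1 n ∧ s.1 ∈ Ioc (conjPart l (s.2 + 1)) (conjPart l s.2) := by
  obtain ⟨i, j⟩ := s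
  rw [Finset.mem_filter, cells, Finset.mem_filter, mem_product]
  simp only [mem_Icc, mem_Ioc, arm]
  constructor
  · rintro ⟨⟨⟨⟨hi, -⟩, hj, hjn⟩, hjr⟩, harm⟩
    have hcol := le_rowLen_iff l hi hj
    have hnext := le_rowLen_iff l hi (by omega : 1 ≤ j + 1)
    omega
  · rintro ⟨⟨hj, hjn⟩, hlt, hle⟩
    have hi : 1 ≤ i := Nat.one_le_of_lt hlt
    have hcol := le_rowLen_iff l hi hj
    have hnext := le_rowLen_iff l hi (by omega : 1 ≤ j + 1)
    have := conjPart_le l j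
    have := rowLen_le l i
    omega

theorem sum_conjPart : ∑ j ∈ Icc 1 n, conjPart l j = n :=
  (l.parts.sum_Icc_countP_le_eq_sum fun _ => Nat.Partition.le_of_mem_parts).trans l.parts_sum

theorem nStat_eq_sum_sum_range_conjPart :
    nStat l = ∑ j ∈ Icc 1 n, ∑ i ∈ range (conjPart l j), i := calc
  nStat l = ∑ i ∈ Icc 1 n, ∑ j ∈ Icc 1 n, if i ≤ conjPart l j then i - 1 else 0 := by
    simp only [nStat, rowLen, card_filter, mul_sum, mul_ite, mul_one, mul_zero]
  _ = ∑ j ∈ Icc 1 n, ∑ i ∈ Icc 1 (conjPart l j), (i - 1) := by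
    rw [sum_comm]
    refine sum_congr rfl fun j _ => ?_
    rw [← sum_filter]
    congr 1
    ext i
    have := conjPart_le l j
    simp only [Finset.mem_filter, mem_Icc]
    omega
  _ = ∑ j ∈ Icc 1 n, ∑ i ∈ range (conjPart l j), i := by
    simp only [← Ico_add_one_right_eq_Icc, sum_Ico_eq_sum_range, Nat.add_sub_cancel,
      Nat.add_sub_cancel_left]

theorem sum_conjPart_sq : ∑ j ∈ Icc 1 n, conjPart l j ^ 2 = n + 2 * nStat l := by
  have hsq (c : ℕ) : c ^ 2 = c + (∑ i ∈ range c, i) * 2 := by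
    rw [sum_range_id_mul_two]
    cases c with
    | zero => rfl
    | succ c => rw [Nat.add_sub_cancel]; ring
  simp only [hsq, sum_add_distrib, sum_conjPart, nStat_eq_sum_sum_range_conjPart, sum_mul,
    mul_comm 2]

theorem prod_qPoch_mult (q : ℝ) :
    ∏ j ∈ Icc 1 n, qPoch q (mult l j) =
      ∏ s ∈ (cells l).filter (fun s => arm l s = 0), (1 - 1 / q ^ hookLen l s) := by
  rw [prod_finset_product_right _ (Icc 1 n) (fun j => Ioc (conjPart l (j + 1)) (conjPart l j))
    (mem_cells_arm_eq_zero_iff l)]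
  refine prod_congr rfl fun j hj => ?_
  have hhook : ∀ i ∈ Ioc (conjPart l (j + 1)) (conjPart l j),
      hookLen l (i, j) = conjPart l j - i + 1 := fun i hi => by
    have harm : arm l (i, j) = 0 :=
      (Finset.mem_filter.mp ((mem_cells_arm_eq_zero_iff l (i, j)).mpr ⟨hj, hi⟩)).2
    simp only [hookLen, leg, harm, zero_add]
  rw [prod_congr rfl fun i hi => by rw [hhook i hi], qPoch,
    conjPart_eq_conjPart_succ_add_mult l j, prod_Ioc_reflect_eq_prod_Icc (fun k => 1 - 1 / q ^ k)]

end

theorem stmt13_general (q : ℝ) (n : ℕ) (l : n.Partition) :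
    Pden q l =
      q ^ (n + 2 * nStat l) *
        ∏ s ∈ (cells l).filter (fun s => arm l s = 0), (1 - 1/q^(hookLen l s)) := by
  rw [Pden, prod_mul_distrib, prod_pow_eq_pow_sum, sum_conjPart_sq, prod_qPoch_mult]

theorem stmt13 (q : ℝ) (hq : 1 < q) (n : ℕ) (l : n.Partition) :
    Pden q l =
      q ^ (n + 2 * nStat l) *
        ∏ s ∈ (cells l).filter (fun s => arm l s = 0), (1 - 1/q^(hookLen l s)) :=
  stmt13_general q n l
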